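/- For every positive integer n, scc(G_n) ≤ 8n + 2. -/

import Mathlib

open Finset

/-- A clique covering of `G`: a finite family of cliques covering every edge. -/
def IsCliqueCover {V : Type*} (G : SimpleGraph V) (𝒞 : Finset (Finset V)) : Prop :=
  (∀ C ∈ 𝒞, G.IsClique (C : Set V)) ∧
  ∀ u v, G.Adj u v → ∃ C ∈ 𝒞, u ∈ C ∧ v ∈ C

/-- A clique partition of `G`: every edge lies in exactly one clique of the family. -/
def IsCliquePartition {V : Type*} (G : SimpleGraph V) (𝒞 : Finset (Finset V)) : Prop :=
  (∀ C ∈ 𝒞, G.IsClique (C : Set V)) ∧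
  ∀ u v, G.Adj u v → ∃! C, C ∈ 𝒞 ∧ u ∈ C ∧ v ∈ C

/-- The sigma clique cover number: minimum total size of cliques in a clique covering. -/
noncomputable def scc {V : Type*} (G : SimpleGraph V) : ℕ :=
  sInf {k | ∃ 𝒞, IsCliqueCover G 𝒞 ∧ ∑ C ∈ 𝒞, C.card = k}

/-- The sigma clique partition number: minimum total size of cliques in a clique partition. -/
noncomputable def scp {V : Type*} (G : SimpleGraph V) : ℕ :=
  sInf {k | ∃ 𝒞, IsCliquePartition G 𝒞 ∧ ∑ C ∈ 𝒞, C.card = k}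

/-- The clique cover number: minimum number of cliques in a clique covering. -/
noncomputable def cc {V : Type*} (G : SimpleGraph V) : ℕ :=
  sInf {k | ∃ 𝒞, IsCliqueCover G 𝒞 ∧ 𝒞.card = k}

/-- The clique partition number: minimum number of cliques in a clique partition. -/
noncomputable def cp {V : Type*} (G : SimpleGraph V) : ℕ :=
  sInf {k | ∃ 𝒞, IsCliquePartition G 𝒞 ∧ 𝒞.card = k}

/-- `scc'`: the minimum total size of cliques over clique coverings achieving `cc G`. -/
noncomputable def scc' {V : Type*} (G : SimpleGraph V) : ℕ :=
  sInf {k | ∃ 𝒞, IsCliqueCover G 𝒞 ∧ 𝒞.card = cc G ∧ ∑ C ∈ 𝒞, C.card = k}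
/-- The vertex set of the graph `Gₙ`: `x₀`, `y₀`, `X = {x i}`, `Y = {y i}`, `Z = {z i}`. -/
inductive Vtx (n : ℕ) : Type where
  | x0 : Vtx n
  | y0 : Vtx n
  | x : Fin n → Vtx n
  | y : Fin n → Vtx n
  | z : Fin n → Vtx n
  deriving DecidableEq, Fintype

/-- Membership in `X ∪ {x₀}`. -/
def inXx0 {n : ℕ} : Vtx n → Prop
  | .x0 => True
  | .x _ => True
  | _ => False

/-- Membership in `Y ∪ {y₀}`. -/
def inYy0 {n : ℕ} : Vtx n → Prop
  | .y0 => True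
  | .y _ => True
  | _ => False

/-- Membership in `Z`. -/
def inZ {n : ℕ} : Vtx n → Prop
  | .z _ => True
  | _ => False

/-- Membership in `X ∪ Y`. -/
def inXY {n : ℕ} : Vtx n → Prop
  | .x _ => True
  | .y _ => True
  | _ => False

/-- `xyPair u v` holds iff `u = x i` and `v = y i` for some `i`. -/
def xyPair {n : ℕ} : Vtx n → Vtx n → Prop
  | .x i, .y j => i = j
  | _, _ => False

/-- The graph `Gₙ`: `X ∪ {x₀}`, `Y ∪ {y₀}` and `Z` are cliques, every vertex of `Z` is
adjacent to every vertex of `X ∪ Y`, and `x i` is adjacent to `y j` iff `i = j`. -/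
def Gn (n : ℕ) : SimpleGraph (Vtx n) where
  Adj u v := u ≠ v ∧ (inXx0 u ∧ inXx0 v ∨ inYy0 u ∧ inYy0 v ∨ inZ u ∧ inZ v ∨
    inZ u ∧ inXY v ∨ inXY u ∧ inZ v ∨ xyPair u v ∨ xyPair v u)
  symm := by
    constructor
    rintro u v ⟨h1, h2⟩
    exact ⟨h1.symm, by tauto⟩
  loopless := ⟨fun u h => h.1 rfl⟩

/-!
The four cliques `X ∪ {x₀}`, `Y ∪ {y₀}`, `X ∪ Z`, `Y ∪ Z` together with the `n` edges `xᵢyᵢ`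
cover every edge of `Gₙ`, and their sizes add up to `2(n + 1) + 2 · 2n + 2n = 8n + 2`.
-/

theorem scc_le_sum_card {V ι : Type*} [Fintype ι] [DecidableEq V] (G : SimpleGraph V)
    (f : ι → Finset V) (hclique : ∀ i, G.IsClique (f i : Set V))
    (hcover : ∀ u v, G.Adj u v → ∃ i, u ∈ f i ∧ v ∈ f i) :
    scc G ≤ ∑ i, (f i).card := by
  have hcover' : IsCliqueCover G (univ.image f) := by
    refine ⟨by simpa using hclique, fun u v huv => ?_⟩
    obtain ⟨i, hu, hv⟩ := hcover u v huv
    exact ⟨f i, mem_image_of_mem f (mem_univ i), hu, hv⟩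
  calc scc G ≤ ∑ C ∈ univ.image f, C.card := Nat.sInf_le ⟨_, hcover', rfl⟩
    _ ≤ ∑ i, (f i).card := sum_image_le_of_nonneg fun _ _ => Nat.zero_le _

namespace Gn

variable {n : ℕ}

def cliqueX (n : ℕ) : Finset (Vtx n) := insert .x0 (univ.image .x)
def cliqueY (n : ℕ) : Finset (Vtx n) := insert .y0 (univ.image .y)
def cliqueXZ (n : ℕ) : Finset (Vtx n) := univ.image .x ∪ univ.image .z
def cliqueYZ (n : ℕ) : Finset (Vtx n) := univ.image .y ∪ univ.image .z
def matchingEdge (i : Fin n) : Finset (Vtx n) := {.x i, .y i}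

def cover (n : ℕ) : Fin 4 ⊕ Fin n → Finset (Vtx n) :=
  Sum.elim ![cliqueX n, cliqueY n, cliqueXZ n, cliqueYZ n] matchingEdge

theorem isClique_cover (i : Fin 4 ⊕ Fin n) : (Gn n).IsClique (cover n i : Set (Vtx n)) := by
  rintro u hu v hv huv
  refine ⟨huv, ?_⟩
  rcases i with i | i
  · fin_cases i <;> cases u <;> cases v <;>
      simp_all [cover, cliqueX, cliqueY, cliqueXZ, cliqueYZ, inXx0, inYy0, inZ, inXY]
  · cases u <;> cases v <;> simp_all [cover, matchingEdge, xyPair]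

theorem exists_mem_cover {u v : Vtx n} (h : (Gn n).Adj u v) :
    ∃ i, u ∈ cover n i ∧ v ∈ cover n i := by
  obtain ⟨-, h⟩ := h
  cases u <;> cases v <;> simp [inXx0, inYy0, inZ, inXY, xyPair] at h <;>
    simp [cover, Sum.exists, Fin.exists_fin_succ, cliqueX, cliqueY, cliqueXZ, cliqueYZ,
      matchingEdge, h]

theorem card_cliqueX : (cliqueX n).card = n + 1 := by
  simp [cliqueX, card_image_of_injective _ fun _ _ h => Vtx.x.inj h]

theorem card_cliqueY : (cliqueY n).card = n + 1 := by
  simp [cliqueY, card_image_of_injective _ fun _ _ h => Vtx.y.inj h]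

theorem card_cliqueXZ : (cliqueXZ n).card = 2 * n := by
  rw [cliqueXZ, card_union_of_disjoint (by simp [disjoint_left])]
  simp [card_image_of_injective _ fun _ _ h => Vtx.x.inj h,
    card_image_of_injective _ fun _ _ h => Vtx.z.inj h, two_mul]

theorem card_cliqueYZ : (cliqueYZ n).card = 2 * n := by
  rw [cliqueYZ, card_union_of_disjoint (by simp [disjoint_left])]
  simp [card_image_of_injective _ fun _ _ h => Vtx.y.inj h,
    card_image_of_injective _ fun _ _ h => Vtx.z.inj h, two_mul]

theorem card_matchingEdge (i : Fin n) : (matchingEdge i).card = 2 := by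
  simp [matchingEdge]

theorem sum_card_cover : ∑ i, (cover n i).card = 8 * n + 2 := by
  simp only [cover, Fintype.sum_sum_type, Fin.sum_univ_four, Sum.elim_inl, Sum.elim_inr,
    Matrix.cons_val, card_cliqueX, card_cliqueY, card_cliqueXZ, card_cliqueYZ,
    card_matchingEdge, sum_const, card_univ, Fintype.card_fin, smul_eq_mul]
  ring

end Gn

theorem stmt_4_general (n : ℕ) : scc (Gn n) ≤ 8 * n + 2 :=
  (scc_le_sum_card _ _ Gn.isClique_cover fun _ _ => Gn.exists_mem_cover).trans
    Gn.sum_card_cover.le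

/-- For every positive integer `n`, `scc(Gₙ) ≤ 8n + 2`. -/
theorem stmt_4 (n : ℕ) (hn : 1 ≤ n) : scc (Gn n) ≤ 8 * n + 2 :=
  stmt_4_general n
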